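/- arXiv:2102.02946 — 5 statements merged into one kernel-verified Lean document; each statement's English description precedes it below -/
import Mathlib

section
/- Let K ≥ 1 be an integer and let c_1,…,c_K and l_1,…,l_K be positive real numbers with Σ_{i=1}^K l_i = K. Then max_{1≤i≤K} c_i·l_i = K / (Σ_{i=1}^K 1/c_i) if and only if c_i·l_i = c_j·l_j for all i, j ∈ {1,…,K}. -/
/-- For positive reals `c i`, `l i` with `Σ l i = K`, the
maximum of `c i * l i` equals `K / Σ (1 / c i)` if and only if all products
`c i * l i` are equal. -/
theorem stmt3 (K : ℕ) (hK : 1 ≤ K) (c l : Fin K → ℝ)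
    (hc : ∀ i, 0 < c i) (hl : ∀ i, 0 < l i)
    (hsum : ∑ i, l i = (K : ℝ)) :
    Finset.univ.sup' ⟨⟨0, hK⟩, Finset.mem_univ _⟩ (fun i => c i * l i)
        = (K : ℝ) / (∑ i, 1 / c i)
      ↔ ∀ i j, c i * l i = c j * l j := by
  set i0 : Fin K := ⟨0, hK⟩ with hi0
  have hS : 0 < ∑ i, 1 / c i :=
    Finset.sum_pos (fun i _ => one_div_pos.mpr (hc i)) ⟨i0, Finset.mem_univ _⟩
  set M := Finset.univ.sup' ⟨i0, Finset.mem_univ _⟩ (fun i => c i * l i) with hM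
  constructor
  · intro hMeq i j
    have hle : ∀ k : Fin K, l k ≤ M / c k := by
      intro k
      have h1 : c k * l k ≤ M := Finset.le_sup' (fun i => c i * l i) (Finset.mem_univ k)
      rw [le_div_iff₀ (hc k)]
      linarith [h1]
    have hterm : ∀ k ∈ Finset.univ, (0:ℝ) ≤ M / c k - l k := fun k _ => by
      linarith [hle k]
    have hsum0 : ∑ k, (M / c k - l k) = 0 := by
      have h2 : ∑ k, M / c k = M * ∑ k, 1 / c k := by
        rw [Finset.mul_sum]
        exact Finset.sum_congr rfl fun k _ => by ring
      rw [Finset.sum_sub_distrib, h2, hsum, hMeq]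
      field_simp
      ring
    have hall : ∀ k ∈ Finset.univ, M / c k - l k = 0 :=
      (Finset.sum_eq_zero_iff_of_nonneg hterm).mp hsum0
    have hkk : ∀ k : Fin K, c k * l k = M := by
      intro k
      have h3 := hall k (Finset.mem_univ k)
      have hck := (hc k).ne'
      have h4 : M / c k = l k := by linarith
      field_simp at h4
      linarith
    rw [hkk i, hkk j]
  · intro hall
    have hv : ∀ k : Fin K, c k * l k = c i0 * l i0 := fun k => hall k i0
    have hMval : M = c i0 * l i0 := by
      apply le_antisymm
      · exact Finset.sup'_le _ _ (fun k _ => le_of_eq (hv k))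
      · exact Finset.le_sup' (fun i => c i * l i) (Finset.mem_univ i0)
    have hK' : (K:ℝ) = (c i0 * l i0) * ∑ k, 1 / c k := by
      rw [← hsum, Finset.mul_sum]
      refine Finset.sum_congr rfl fun k _ => ?_
      have h5 := hv k
      have hck := (hc k).ne'
      field_simp
      linarith [hv k]
    rw [hMval, hK']
    field_simp
end

section
/- (Theorem 2, lower bound) Let K ≥ 1, let h_1,…,h_K be nonzero vectors in ℂ^{N_d}, let P_1,…,P_K > 0, σ > 0, and let r_1,…,r_K be positive reals with Σ_{k=1}^K 1/(K·r_k) = 1. Then the MSE achieved with dynamic learning rate, MSE^d = max_k σ²/(K²·P_k·r_k²·‖h_k‖²), satisfies MSE^d ≥ MSE^lb := σ²/(Σ_{i=1}^K √P_i·‖h_i‖)², with equality if and only if r_i·√P_i·‖h_i‖ = r_j·√P_j·‖h_j‖ for all i, j ∈ {1,…,K}. -/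
/-- Theorem 2, lower bound, MISO. With channel vectors
`h k ≠ 0`, powers `P k > 0`, noise level `σ > 0` and DLR ratios `r k > 0`
satisfying `Σ_k 1/(K r_k) = 1`, the MSE with dynamic learning rate
`MSE^d = max_k σ²/(K² P_k r_k² ‖h_k‖²)` is at least
`MSE^lb = σ²/(Σ_i √P_i ‖h_i‖)²`, with equality iff
`r_i √P_i ‖h_i‖ = r_j √P_j ‖h_j‖` for all `i, j`. -/
theorem stmt4 (K Nd : ℕ) (hK : 1 ≤ K)
    (h : Fin K → EuclideanSpace ℂ (Fin Nd)) (hh : ∀ k, h k ≠ 0)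
    (P : Fin K → ℝ) (hP : ∀ k, 0 < P k) (σ : ℝ) (hσ : 0 < σ)
    (r : Fin K → ℝ) (hr : ∀ k, 0 < r k)
    (hsum : ∑ k, 1 / ((K : ℝ) * r k) = 1) :
    σ ^ 2 / (∑ i, Real.sqrt (P i) * ‖h i‖) ^ 2 ≤
      Finset.univ.sup' ⟨⟨0, hK⟩, Finset.mem_univ _⟩
        (fun k => σ ^ 2 / ((K : ℝ) ^ 2 * P k * r k ^ 2 * ‖h k‖ ^ 2))
    ∧ (Finset.univ.sup' ⟨⟨0, hK⟩, Finset.mem_univ _⟩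
          (fun k => σ ^ 2 / ((K : ℝ) ^ 2 * P k * r k ^ 2 * ‖h k‖ ^ 2))
        = σ ^ 2 / (∑ i, Real.sqrt (P i) * ‖h i‖) ^ 2
      ↔ ∀ i j, r i * Real.sqrt (P i) * ‖h i‖ = r j * Real.sqrt (P j) * ‖h j‖) := by
  have hK0 : (0 : ℝ) < (K : ℝ) := by exact_mod_cast hK
  have hKne : (K : ℝ) ≠ 0 := ne_of_gt hK0
  have ne0 : (Finset.univ : Finset (Fin K)).Nonempty :=
    ⟨⟨0, hK⟩, Finset.mem_univ _⟩
  obtain ⟨c, hckey⟩ : ∃ c : Fin K → ℝ,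
      ∀ k, c k = (K : ℝ) * (r k * Real.sqrt (P k) * ‖h k‖) :=
    ⟨_, fun _ => rfl⟩
  have hnorm : ∀ k, (0 : ℝ) < ‖h k‖ := fun k => norm_pos_iff.mpr (hh k)
  have hsq : ∀ k, (0 : ℝ) < Real.sqrt (P k) := fun k => Real.sqrt_pos.mpr (hP k)
  have hc : ∀ k, 0 < c k := fun k => by
    rw [hckey k]; have := hr k; have := hnorm k; have := hsq k; positivity
  have hden : ∀ k, (K : ℝ) ^ 2 * P k * r k ^ 2 * ‖h k‖ ^ 2 = (c k) ^ 2 := by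
    intro k
    have hPk : Real.sqrt (P k) ^ 2 = P k := Real.sq_sqrt (hP k).le
    rw [hckey k]
    conv_lhs => rw [← hPk]
    ring
  set S : ℝ := ∑ i, Real.sqrt (P i) * ‖h i‖ with hS_def
  have hSsum : S = ∑ i, (1 / ((K : ℝ) * r i)) * c i := by
    apply Finset.sum_congr rfl
    intro i _
    rw [hckey i]
    have h2 : r i ≠ 0 := ne_of_gt (hr i)
    field_simp
  set m : ℝ := Finset.univ.inf' ne0 c with hm_def
  obtain ⟨k0, _, hk0⟩ := Finset.exists_mem_eq_inf' ne0 c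
  have hmk0 : m = c k0 := by rw [hm_def, hk0]
  have hm_le : ∀ k, m ≤ c k := fun k => Finset.inf'_le c (Finset.mem_univ k)
  have hm_pos : 0 < m := by rw [hmk0]; exact hc k0
  have hmS : m ≤ S := by
    calc m = ∑ i, (1 / ((K : ℝ) * r i)) * m := by
            rw [← Finset.sum_mul, hsum, one_mul]
      _ ≤ ∑ i, (1 / ((K : ℝ) * r i)) * c i := by
            apply Finset.sum_le_sum
            intro i _
            have hw : 0 < 1 / ((K : ℝ) * r i) := by have := hr i; positivity
            exact mul_le_mul_of_nonneg_left (hm_le i) hw.le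
      _ = S := hSsum.symm
  have hS_pos : 0 < S := lt_of_lt_of_le hm_pos hmS
  have hsup : Finset.univ.sup' ne0
      (fun k => σ ^ 2 / ((K : ℝ) ^ 2 * P k * r k ^ 2 * ‖h k‖ ^ 2)) = σ ^ 2 / m ^ 2 := by
    apply le_antisymm
    · apply Finset.sup'_le
      intro k _
      rw [hden k]
      have h1 : m ^ 2 ≤ (c k) ^ 2 := pow_le_pow_left₀ hm_pos.le (hm_le k) 2
      have h2 : (0 : ℝ) < m ^ 2 := by positivity
      exact div_le_div_of_nonneg_left (by positivity) h2 h1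
    · have := Finset.le_sup' (fun k => σ ^ 2 / ((K : ℝ) ^ 2 * P k * r k ^ 2 * ‖h k‖ ^ 2))
        (Finset.mem_univ k0)
      rwa [hden k0, ← hmk0] at this
  constructor
  · rw [hsup]
    have h1 : m ^ 2 ≤ S ^ 2 := pow_le_pow_left₀ hm_pos.le hmS 2
    exact div_le_div_of_nonneg_left (by positivity) (by positivity) h1
  · rw [hsup]
    constructor
    · intro heq
      have hm2 : m ^ 2 = S ^ 2 := by
        have hm2p : (m : ℝ) ^ 2 ≠ 0 := by positivity
        have hS2p : (S : ℝ) ^ 2 ≠ 0 := by positivity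
        field_simp at heq
        nlinarith [heq, sq_nonneg σ, hσ]
      have hmSeq : m = S := by
        have hfac : (m - S) * (m + S) = 0 := by nlinarith [hm2]
        rcases mul_eq_zero.mp hfac with h1 | h1
        · linarith
        · nlinarith
      have hzero : ∑ i, (1 / ((K : ℝ) * r i)) * (c i - m) = 0 := by
        have e1 : ∑ i, (1 / ((K : ℝ) * r i)) * (c i - m)
            = S - ∑ i, (1 / ((K : ℝ) * r i)) * m := by
          rw [hSsum, ← Finset.sum_sub_distrib]
          apply Finset.sum_congr rfl
          intro i _; ring
        rw [e1, ← Finset.sum_mul, hsum, one_mul, hmSeq, sub_self]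
      have hall : ∀ i : Fin K, c i = m := by
        intro i
        have hnn : ∀ j ∈ Finset.univ, 0 ≤ (1 / ((K : ℝ) * r j)) * (c j - m) := by
          intro j _
          have hw : 0 < 1 / ((K : ℝ) * r j) := by have := hr j; positivity
          have := hm_le j
          nlinarith
        have h0 := (Finset.sum_eq_zero_iff_of_nonneg hnn).mp hzero i (Finset.mem_univ i)
        have hw : 0 < 1 / ((K : ℝ) * r i) := by have := hr i; positivity
        rcases mul_eq_zero.mp h0 with h1 | h1
        · exact absurd h1 (ne_of_gt hw)
        · linarith
      intro i j
      have h1 := hall i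
      have h2 := hall j
      rw [hckey i] at h1
      rw [hckey j] at h2
      exact mul_left_cancel₀ hKne (by rw [h1, h2])
    · intro heq
      have hceq : ∀ i, c i = c k0 := by
        intro i
        rw [hckey i, hckey k0, heq i k0]
      have hSk0 : S = c k0 := by
        rw [hSsum]
        calc ∑ i, (1 / ((K : ℝ) * r i)) * c i
            = ∑ i, (1 / ((K : ℝ) * r i)) * c k0 := by
              apply Finset.sum_congr rfl; intro i _; rw [hceq i]
          _ = c k0 := by rw [← Finset.sum_mul, hsum, one_mul]
      rw [hmk0, hSk0]
end

section
/- (Theorem 2, part (a)) Let K ≥ 1, let h_1,…,h_K be nonzero vectors in ℂ^{N_d}, P_1,…,P_K > 0, σ > 0, and let 0 < r_min ≤ 1 ≤ r_max. Define MSE^n = max_k σ²/(K²·P_k·‖h_k‖²) (the MSE with fixed learning rate, i.e., all r_k = 1). Then: (i) there exist r_1,…,r_K with r_k ∈ [r_min, r_max] and Σ_k 1/(K·r_k) = 1 such that max_k σ²/(K²·P_k·r_k²·‖h_k‖²) ≤ MSE^n; and (ii) if moreover r_min < 1 < r_max and the quantities √P_i·‖h_i‖, i = 1,…,K, are not all equal,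 then there exist such feasible r_1,…,r_K with max_k σ²/(K²·P_k·r_k²·‖h_k‖²) < MSE^n. -/
open Set Filter Finset

set_option maxHeartbeats 2000000 in
/-- Theorem 2, part (a), MISO. Let `MSE^n` be the MSE with
fixed learning rate (`r_k = 1`). (i) There is a feasible choice of DLR ratios
`r_k ∈ [r_min, r_max]` with `Σ_k 1/(K r_k) = 1` whose MSE is at most `MSE^n`;
(ii) if moreover `r_min < 1 < r_max` and the quantities `√P_i ‖h_i‖` are not
all equal, the inequality can be made strict. -/
theorem stmt5 (K Nd : ℕ) (hK : 1 ≤ K)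
    (h : Fin K → EuclideanSpace ℂ (Fin Nd)) (hh : ∀ k, h k ≠ 0)
    (P : Fin K → ℝ) (hP : ∀ k, 0 < P k) (σ : ℝ) (hσ : 0 < σ)
    (rmin rmax : ℝ) (hrmin : 0 < rmin) (hrmin1 : rmin ≤ 1) (hrmax1 : 1 ≤ rmax) :
    (∃ r : Fin K → ℝ, (∀ k, rmin ≤ r k ∧ r k ≤ rmax) ∧
        (∑ k, 1 / ((K : ℝ) * r k) = 1) ∧
        Finset.univ.sup' ⟨⟨0, hK⟩, Finset.mem_univ _⟩
            (fun k => σ ^ 2 / ((K : ℝ) ^ 2 * P k * r k ^ 2 * ‖h k‖ ^ 2))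
          ≤ Finset.univ.sup' ⟨⟨0, hK⟩, Finset.mem_univ _⟩
            (fun k => σ ^ 2 / ((K : ℝ) ^ 2 * P k * ‖h k‖ ^ 2)))
    ∧ (rmin < 1 → 1 < rmax →
        (¬ ∀ i j, Real.sqrt (P i) * ‖h i‖ = Real.sqrt (P j) * ‖h j‖) →
        ∃ r : Fin K → ℝ, (∀ k, rmin ≤ r k ∧ r k ≤ rmax) ∧
          (∑ k, 1 / ((K : ℝ) * r k) = 1) ∧
          Finset.univ.sup' ⟨⟨0, hK⟩, Finset.mem_univ _⟩
              (fun k => σ ^ 2 / ((K : ℝ) ^ 2 * P k * r k ^ 2 * ‖h k‖ ^ 2))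
            < Finset.univ.sup' ⟨⟨0, hK⟩, Finset.mem_univ _⟩
              (fun k => σ ^ 2 / ((K : ℝ) ^ 2 * P k * ‖h k‖ ^ 2))) := by
  have hK0 : (0:ℝ) < (K:ℝ) := by exact_mod_cast hK
  set f : Fin K → ℝ := fun k => σ ^ 2 / ((K : ℝ) ^ 2 * P k * ‖h k‖ ^ 2) with hf
  have hhk : ∀ k, (0:ℝ) < ‖h k‖ := fun k => norm_pos_iff.2 (hh k)
  have hfpos : ∀ k, 0 < f k := fun k => by
    apply div_pos (by positivity)
    have := hP k; have := hhk k; positivity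
  constructor
  · refine ⟨fun _ => 1, fun k => ⟨hrmin1, hrmax1⟩, ?_, le_of_eq ?_⟩
    · have hKne : (K:ℝ) ≠ 0 := ne_of_gt hK0
      simp [Finset.sum_const, Finset.card_univ]
      field_simp
    · congr 1; funext k; norm_num; rfl
  · intro hr1 hr2 hne
    set ne1 : Finset.Nonempty (Finset.univ : Finset (Fin K)) := ⟨⟨0, hK⟩, Finset.mem_univ _⟩
    set M : ℝ := Finset.univ.sup' ne1 f with hM
    have hMpos : 0 < M := lt_of_lt_of_le (hfpos ⟨0, hK⟩) (Finset.le_sup' f (Finset.mem_univ _))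
    set S : Finset (Fin K) := Finset.univ.filter (fun k => f k = M) with hS
    have hfle : ∀ k, f k ≤ M := fun k => Finset.le_sup' f (Finset.mem_univ _)
    have hSne : S.Nonempty := by
      obtain ⟨k, _, hk⟩ := Finset.exists_mem_eq_sup' ne1 f
      exact ⟨k, Finset.mem_filter.2 ⟨Finset.mem_univ _, hk.symm⟩⟩
    -- the complement is nonempty
    have hScne : (Sᶜ : Finset (Fin K)).Nonempty := by
      push_neg at hne
      obtain ⟨i, j, hij⟩ := hne
      have hfij : f i ≠ f j := by
        intro hfe
        apply hij
        have hKp2 : (0:ℝ) < (K:ℝ)^2 := by positivity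
        have h1 : P i * ‖h i‖^2 = P j * ‖h j‖^2 := by
          have hi := hP i; have hj := hP j; have hi2 := hhk i; have hj2 := hhk j
          simp only [hf] at hfe
          rw [div_eq_div_iff (by positivity) (by positivity)] at hfe
          have hσK : σ ^ 2 * (K:ℝ) ^ 2 ≠ 0 := by positivity
          apply mul_left_cancel₀ hσK
          linear_combination -hfe
        have h2 : (Real.sqrt (P i) * ‖h i‖)^2 = (Real.sqrt (P j) * ‖h j‖)^2 := by
          rw [mul_pow, mul_pow, Real.sq_sqrt (hP i).le, Real.sq_sqrt (hP j).le, h1]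
        have hpi : 0 ≤ Real.sqrt (P i) * ‖h i‖ := by positivity
        have hpj : 0 ≤ Real.sqrt (P j) * ‖h j‖ := by positivity
        nlinarith
      rcases ne_or_eq (f i) M with hi | hi
      · exact ⟨i, Finset.mem_compl.2 (by simp [hS, hi])⟩
      · exact ⟨j, Finset.mem_compl.2 (by simp [hS, hi ▸ hfij.symm])⟩
    set s : ℕ := S.card with hs
    have hs1 : 1 ≤ s := Finset.card_pos.2 hSne
    have hsK : s < K := by
      have hne' : S ≠ Finset.univ := by
        intro hSu
        obtain ⟨k, hk⟩ := hScne
        rw [Finset.mem_compl] at hk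
        exact hk (hSu ▸ Finset.mem_univ k)
      have := Finset.card_lt_card (Finset.ssubset_univ_iff.2 hne')
      simpa using this
    have hsR : (s:ℝ) < (K:ℝ) := by exact_mod_cast hsK
    have hs0 : (0:ℝ) < (s:ℝ) := by exact_mod_cast hs1
    -- m : the sup over the complement
    set m : ℝ := (Sᶜ : Finset (Fin K)).sup' hScne f with hm
    have hmM : m < M := by
      rw [hm, Finset.sup'_lt_iff]
      intro k hk
      rw [Finset.mem_compl, hS, Finset.mem_filter] at hk
      exact lt_of_le_of_ne (hfle k) (fun he => hk ⟨Finset.mem_univ _, he⟩)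
    have hm0 : 0 < m := by
      obtain ⟨k, hk⟩ := hScne
      exact lt_of_lt_of_le (hfpos k) (Finset.le_sup' f hk)
    clear_value f M S s m
    -- the b-function
    set g : ℝ → ℝ := fun a => a * ((K:ℝ) - s) / (a * K - s) with hg
    have hgc : Filter.Tendsto g (nhdsWithin 1 (Set.Ioi 1)) (nhds 1) := by
      have hden : (1:ℝ) * K - s ≠ 0 := by nlinarith
      have : ContinuousAt g 1 := by
        apply ContinuousAt.div
        · fun_prop
        · fun_prop
        · exact hden
      have hg1 : g 1 = 1 := by
        simp only [hg, one_mul]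
        exact div_self (sub_ne_zero.2 (ne_of_gt hsR))
      have := this.mono_left (nhdsWithin_le_nhds : nhdsWithin (1:ℝ) (Set.Ioi 1) ≤ nhds 1)
      rwa [hg1] at this
    -- eventual properties
    have e1 : ∀ᶠ a in nhdsWithin (1:ℝ) (Set.Ioi 1), rmin < g a :=
      hgc.eventually_const_lt hr1
    have e2 : ∀ᶠ a in nhdsWithin (1:ℝ) (Set.Ioi 1), m < (g a)^2 * M := by
      have : Filter.Tendsto (fun a => (g a)^2 * M) (nhdsWithin 1 (Set.Ioi 1)) (nhds M) := by
        have := (hgc.pow 2).mul_const M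
        simpa using this
      exact this.eventually_const_lt hmM
    have e3 : ∀ᶠ a in nhdsWithin (1:ℝ) (Set.Ioi 1), a ≤ rmax := by
      filter_upwards [Ioc_mem_nhdsGT_of_mem (Set.mem_Ico.2 ⟨le_refl (1:ℝ), hr2⟩)] with a ha
      exact ha.2
    have e4 : ∀ᶠ a in nhdsWithin (1:ℝ) (Set.Ioi 1), 1 < a :=
      eventually_mem_nhdsWithin
    obtain ⟨a, ha1, ha2, ha3, ha4⟩ := (e1.and (e2.and (e3.and e4))).exists
    have ha41 : 1 < a := ha4
    have hden : (0:ℝ) < a * (K:ℝ) - s := by nlinarith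
    have hbga : g a = a * ((K:ℝ) - s) / (a * (K:ℝ) - s) := rfl
    set b : ℝ := a * ((K:ℝ) - s) / (a * (K:ℝ) - s) with hb
    rw [hbga] at ha1 ha2
    clear_value b
    clear hbga hgc e1 e2 e3 e4 ha4 hg g
    have hb0 : 0 < b := lt_trans hrmin ha1
    have hb1 : b < 1 := by
      rw [hb, div_lt_one hden]
      nlinarith
    -- the choice of r
    refine ⟨fun k => if k ∈ S then a else b, fun k => ?_, ?_, ?_⟩
    · by_cases hk : k ∈ S <;> simp [hk]
      · exact ⟨le_trans hrmin1 ha41.le, ha3⟩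
      · exact ⟨ha1.le, le_trans hb1.le hrmax1⟩
    · have csc : (Sᶜ : Finset (Fin K)).card = K - s := by
        rw [Finset.card_compl, Fintype.card_fin, hs]
      have cS : ∑ k ∈ S, (1:ℝ)/((K:ℝ) * if k ∈ S then a else b)
          = s * (1/((K:ℝ)*a)) := by
        rw [Finset.sum_congr rfl (fun k hk => by rw [if_pos hk]),
          Finset.sum_const, nsmul_eq_mul, ← hs]
      have cSc : ∑ k ∈ (Sᶜ : Finset (Fin K)), (1:ℝ)/((K:ℝ) * if k ∈ S then a else b)
          = ((K:ℝ) - s) * (1/((K:ℝ)*b)) := by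
        rw [Finset.sum_congr rfl (fun k hk => by rw [if_neg (Finset.mem_compl.1 hk)]),
          Finset.sum_const, nsmul_eq_mul, csc]
        congr 1
        push_cast [Nat.cast_sub hsK.le]
        ring
      rw [← Finset.sum_add_sum_compl S, cS, cSc, hb]
      have hKa : (K:ℝ) * a ≠ 0 := by positivity
      have hKs : (K:ℝ) - s ≠ 0 := sub_ne_zero.2 (ne_of_gt hsR)
      field_simp
      ring
    · rw [Finset.sup'_lt_iff]
      intro k _
      beta_reduce
      by_cases hk : k ∈ S
      · rw [if_pos hk]
        have hfk : f k = M := by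
          rw [hS, Finset.mem_filter] at hk; exact hk.2
        have heq : σ ^ 2 / ((K:ℝ) ^ 2 * P k * a ^ 2 * ‖h k‖ ^ 2) = f k / a ^ 2 := by
          rw [hf, div_div]; ring_nf
        rw [heq, hfk]
        have ha2' : (0:ℝ) < a ^ 2 := by positivity
        rw [div_lt_iff₀ ha2']
        have h1 : (1:ℝ) < a ^ 2 := by nlinarith
        calc M = M * 1 := by ring
          _ < M * a ^ 2 := (mul_lt_mul_iff_right₀ hMpos).2 h1
      · rw [if_neg hk]
        have hfk : f k ≤ m := by
          rw [hm]; exact Finset.le_sup' f (Finset.mem_compl.2 hk)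
        have heq : σ ^ 2 / ((K:ℝ) ^ 2 * P k * b ^ 2 * ‖h k‖ ^ 2) = f k / b ^ 2 := by
          rw [hf, div_div]; ring_nf
        rw [heq]
        have hb2' : (0:ℝ) < b ^ 2 := by positivity
        rw [div_lt_iff₀ hb2']
        nlinarith [ha2, hfk]
end

section
/- Let K ≥ 1, let c_1,…,c_K > 0, let 0 < a ≤ b, let t > 0, and define l_i = min(b, max(a, t/c_i)) for each i (the clipping of t/c_i to [a,b]). Assume Σ_{i=1}^K l_i = K. Then for every l'_1,…,l'_K with l'_i ∈ [a,b] for all i and Σ_{i=1}^K l'_i = K, one has max_{1≤i≤K} c_i·l_i ≤ max_{1≤i≤K} c_i·l'_i; that is, the clipped solution minimizes max_i c_i·l_i over the feasible set. -/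
/-- The clipped solution `l i = clip(t / c i, [a, b])`
(when it satisfies the sum constraint `Σ l i = K`) minimizes
`max_i c i * l i` over all feasible `l'` with `l' i ∈ [a, b]` and
`Σ l' i = K`. -/
theorem stmt6 (K : ℕ) (hK : 1 ≤ K) (c : Fin K → ℝ) (hc : ∀ i, 0 < c i)
    (a b t : ℝ) (ha : 0 < a) (hab : a ≤ b) (ht : 0 < t)
    (l : Fin K → ℝ) (hl : ∀ i, l i = min b (max a (t / c i)))
    (hsum : ∑ i, l i = (K : ℝ))
    (l' : Fin K → ℝ) (hl' : ∀ i, a ≤ l' i ∧ l' i ≤ b)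
    (hsum' : ∑ i, l' i = (K : ℝ)) :
    Finset.univ.sup' ⟨⟨0, hK⟩, Finset.mem_univ _⟩ (fun i => c i * l i)
      ≤ Finset.univ.sup' ⟨⟨0, hK⟩, Finset.mem_univ _⟩ (fun i => c i * l' i) := by
  by_contra h
  push_neg at h
  obtain ⟨j, -, hj⟩ := Finset.exists_mem_eq_sup'
    (⟨⟨0, hK⟩, Finset.mem_univ _⟩ : (Finset.univ : Finset (Fin K)).Nonempty)
    (fun i => c i * l i)
  have hM : ∀ i, c i * l' i < c j * l j := by
    intro i
    calc c i * l' i ≤ Finset.univ.sup' ⟨⟨0, hK⟩, Finset.mem_univ _⟩ (fun i => c i * l' i) :=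
          Finset.le_sup' (fun i => c i * l' i) (Finset.mem_univ i)
      _ < c j * l j := by rw [← hj]; exact h
  by_cases hja : t / c j ≤ a
  · -- then l j = a, and c j * l' j < c j * a forces l' j < a
    have hlj : l j = a := by
      rw [hl j, max_eq_left hja, min_eq_right hab]
    have := hM j
    rw [hlj] at this
    have : l' j < a := lt_of_mul_lt_mul_left (by linarith [this]) (hc j).le
    linarith [(hl' j).1]
  · push_neg at hja
    -- M ≤ t
    have hljle : l j ≤ t / c j := by
      rw [hl j, max_eq_right hja.le]; exact min_le_right _ _
    have hMt : c j * l j ≤ t := by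
      have := mul_le_mul_of_nonneg_left hljle (hc j).le
      rwa [mul_div_cancel₀ t (hc j).ne'] at this
    have hle : ∀ i, l' i ≤ l i := by
      intro i
      have h1 : c i * l' i < t := lt_of_lt_of_le (hM i) hMt
      have h2 : l' i < t / c i := (lt_div_iff₀ (hc i)).mpr (by linarith [h1])
      rw [hl i]
      exact le_min (hl' i).2 (h2.le.trans (le_max_right _ _))
    have hltj : l' j < l j := lt_of_mul_lt_mul_left (by linarith [hM j]) (hc j).le
    have : ∑ i, l' i < ∑ i, l i :=
      Finset.sum_lt_sum (fun i _ => hle i) ⟨j, Finset.mem_univ j, hltj⟩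
    rw [hsum, hsum'] at this
    exact lt_irrefl _ this
end

section
/- (Theorem 3, lower bound) Let K ≥ 1, let H_1,…,H_K be complex N_t × N_d matrices, P_1,…,P_K > 0, σ > 0, and let m ∈ ℂ^{N_t} with ‖m‖ = 1 and H_kᴴ·m ≠ 0 for all k. Let r_1,…,r_K be positive reals with Σ_{k=1}^K 1/(K·r_k) = 1. Then MSE^d = max_k σ²·‖m‖²/(K²·P_k·r_k²·‖H_kᴴ·m‖²) satisfies MSE^d ≥ MSE^lbm := σ²/(Σ_{i=1}^K √P_i·‖H_iᴴ·m‖)², with equality if and only if r_i·√P_i·‖H_iᴴ·m‖ = r_j·√P_j·‖H_jᴴ·m‖ for all i, j ∈ {1,…,K}. -/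
open Matrix

/-- The Euclidean (ℓ²) norm of a complex vector `v : Fin n → ℂ`. -/
noncomputable def enormC {n : ℕ} (v : Fin n → ℂ) : ℝ :=
  ‖(WithLp.equiv 2 (Fin n → ℂ)).symm v‖

/-- Theorem 3, lower bound, MIMO. For a unit-norm receive
beamforming vector `m` with `H_kᴴ m ≠ 0`, and DLR ratios `r_k > 0` with
`Σ_k 1/(K r_k) = 1`, the MSE `max_k σ²‖m‖²/(K² P_k r_k² ‖H_kᴴ m‖²)` is at
least `σ²/(Σ_i √P_i ‖H_iᴴ m‖)²`, with equality iff
`r_i √P_i ‖H_iᴴ m‖ = r_j √P_j ‖H_jᴴ m‖` for all `i, j`. -/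
theorem stmt9 (K Nt Nd : ℕ) (hK : 1 ≤ K)
    (H : Fin K → Matrix (Fin Nt) (Fin Nd) ℂ)
    (P : Fin K → ℝ) (hP : ∀ k, 0 < P k) (σ : ℝ) (hσ : 0 < σ)
    (m : Fin Nt → ℂ) (hm : enormC m = 1) (hHm : ∀ k, (H k)ᴴ *ᵥ m ≠ 0)
    (r : Fin K → ℝ) (hr : ∀ k, 0 < r k)
    (hsum : ∑ k, 1 / ((K : ℝ) * r k) = 1) :
    σ ^ 2 / (∑ i, Real.sqrt (P i) * enormC ((H i)ᴴ *ᵥ m)) ^ 2 ≤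
      Finset.univ.sup' ⟨⟨0, hK⟩, Finset.mem_univ _⟩
        (fun k => σ ^ 2 * enormC m ^ 2 /
          ((K : ℝ) ^ 2 * P k * r k ^ 2 * enormC ((H k)ᴴ *ᵥ m) ^ 2))
    ∧ (Finset.univ.sup' ⟨⟨0, hK⟩, Finset.mem_univ _⟩
          (fun k => σ ^ 2 * enormC m ^ 2 /
            ((K : ℝ) ^ 2 * P k * r k ^ 2 * enormC ((H k)ᴴ *ᵥ m) ^ 2))
        = σ ^ 2 / (∑ i, Real.sqrt (P i) * enormC ((H i)ᴴ *ᵥ m)) ^ 2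
      ↔ ∀ i j, r i * Real.sqrt (P i) * enormC ((H i)ᴴ *ᵥ m)
          = r j * Real.sqrt (P j) * enormC ((H j)ᴴ *ᵥ m)) := by
  -- abbreviations
  set e : Fin K → ℝ := fun k => enormC ((H k)ᴴ *ᵥ m) with he_def
  set a : Fin K → ℝ := fun k => r k * Real.sqrt (P k) * e k with ha_def
  have hK' : (0:ℝ) < K := by exact_mod_cast hK
  have he : ∀ k, 0 < e k := by
    intro k
    show 0 < enormC _
    unfold enormC
    rw [norm_pos_iff]
    exact fun hz => hHm k (by simpa using hz)
  have ha : ∀ k, 0 < a k := fun k =>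
    mul_pos (mul_pos (hr k) (Real.sqrt_pos.mpr (hP k))) (he k)
  have hσ2 : (0:ℝ) < σ ^ 2 := by positivity
  -- rewrite f k
  have hfa : ∀ k, σ ^ 2 * enormC m ^ 2 /
      ((K : ℝ) ^ 2 * P k * r k ^ 2 * e k ^ 2)
      = σ ^ 2 / ((K : ℝ) * a k) ^ 2 := by
    intro k
    have hs : Real.sqrt (P k) ^ 2 = P k := Real.sq_sqrt (hP k).le
    rw [hm]
    have : ((K : ℝ) * a k) ^ 2 = (K : ℝ) ^ 2 * P k * r k ^ 2 * e k ^ 2 := by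
      simp only [ha_def]
      rw [show ((K:ℝ) * (r k * Real.sqrt (P k) * e k)) ^ 2
          = (K:ℝ)^2 * (Real.sqrt (P k)^2) * r k ^2 * e k ^2 from by ring, hs]
    rw [this]; ring
  -- minimizer
  obtain ⟨k0, -, hk0⟩ := Finset.exists_min_image Finset.univ a
    ⟨⟨0, hK⟩, Finset.mem_univ _⟩
  have hk0' : ∀ k, a k0 ≤ a k := fun k => hk0 k (Finset.mem_univ k)
  -- sup' computation
  have hsup : Finset.univ.sup' ⟨⟨0, hK⟩, Finset.mem_univ _⟩
        (fun k => σ ^ 2 * enormC m ^ 2 /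
          ((K : ℝ) ^ 2 * P k * r k ^ 2 * enormC ((H k)ᴴ *ᵥ m) ^ 2))
      = σ ^ 2 / ((K : ℝ) * a k0) ^ 2 := by
    apply le_antisymm
    · apply Finset.sup'_le
      intro k _
      rw [hfa k]
      have h1 : (0:ℝ) < ((K : ℝ) * a k0) ^ 2 := pow_pos (mul_pos hK' (ha k0)) 2
      apply div_le_div_of_nonneg_left hσ2.le h1
      have : (K : ℝ) * a k0 ≤ (K : ℝ) * a k :=
        mul_le_mul_of_nonneg_left (hk0' k) hK'.le
      nlinarith [mul_pos hK' (ha k0)]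
    · rw [← hfa k0]
      exact Finset.le_sup' (fun k => σ ^ 2 * enormC m ^ 2 /
        ((K : ℝ) ^ 2 * P k * r k ^ 2 * enormC ((H k)ᴴ *ᵥ m) ^ 2))
        (Finset.mem_univ k0)
  set S : ℝ := ∑ i, Real.sqrt (P i) * e i with hS_def
  have hS_pos : 0 < S := Finset.sum_pos
    (fun i _ => mul_pos (Real.sqrt_pos.mpr (hP i)) (he i))
    ⟨⟨0, hK⟩, Finset.mem_univ _⟩
  -- Σ 1/r = K
  have hKsum : ∑ k, 1 / r k = (K : ℝ) := by
    have : ∑ k, 1 / ((K : ℝ) * r k) = (1 / K) * ∑ k, 1 / r k := by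
      rw [Finset.mul_sum]
      congr 1; ext k
      field_simp
    rw [this] at hsum
    field_simp at hsum
    linarith
  have hdiv : ∀ i, a i * (1 / r i) = Real.sqrt (P i) * e i := by
    intro i
    have hri := (hr i).ne'
    simp only [ha_def]
    field_simp
  have hterm : ∀ i, a k0 * (1 / r i) ≤ Real.sqrt (P i) * e i := by
    intro i
    have : a k0 * (1 / r i) ≤ a i * (1 / r i) :=
      mul_le_mul_of_nonneg_right (hk0' i) (one_div_nonneg.mpr (hr i).le)
    exact this.trans_eq (hdiv i)
  have hKa : (K : ℝ) * a k0 ≤ S := by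
    calc (K : ℝ) * a k0 = ∑ i, a k0 * (1 / r i) := by
          rw [← Finset.mul_sum, hKsum]; ring
      _ ≤ S := Finset.sum_le_sum fun i _ => hterm i
  have hKa_pos : 0 < (K : ℝ) * a k0 := mul_pos hK' (ha k0)
  have hmain : σ ^ 2 / S ^ 2 ≤ σ ^ 2 / ((K : ℝ) * a k0) ^ 2 := by
    apply div_le_div_of_nonneg_left hσ2.le (by positivity)
    nlinarith
  refine ⟨hsup ▸ hmain, ?_⟩
  rw [hsup]
  constructor
  · intro heq i j
    -- σ²/(K a k0)² = σ²/S² ⇒ (K a k0)² = S² ⇒ K a k0 = S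
    have hX : ((K : ℝ) * a k0) ^ 2 = S ^ 2 := by
      have h1 : ((K : ℝ) * a k0) ^ 2 ≠ 0 := by positivity
      have h2 : S ^ 2 ≠ 0 := by positivity
      rw [div_eq_div_iff h1 h2] at heq
      have := mul_left_cancel₀ (ne_of_gt hσ2) heq
      linarith
    have hXe : (K : ℝ) * a k0 = S := by nlinarith
    -- each term equality
    have hzero : ∑ i, (Real.sqrt (P i) * e i - a k0 * (1 / r i)) = 0 := by
      rw [Finset.sum_sub_distrib]
      have : ∑ i, a k0 * (1 / r i) = (K : ℝ) * a k0 := by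
        rw [← Finset.mul_sum, hKsum]; ring
      rw [this, hXe]; simp [hS_def]
    have hall : ∀ k ∈ Finset.univ, Real.sqrt (P k) * e k - a k0 * (1 / r k) = 0 :=
      (Finset.sum_eq_zero_iff_of_nonneg
        (fun k _ => sub_nonneg.mpr (hterm k))).mp hzero
    have haeq : ∀ k, a k = a k0 := by
      intro k
      have h1 := hall k (Finset.mem_univ k)
      have h2 : Real.sqrt (P k) * e k = a k0 * (1 / r k) := by linarith
      have h3 : a k = (Real.sqrt (P k) * e k) * r k := by
        simp only [ha_def]; ring
      rw [h3, h2, mul_assoc, one_div_mul_cancel (hr k).ne', mul_one]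
    show a i = a j
    rw [haeq i, haeq j]
  · intro hall
    have haeq : ∀ k, a k = a k0 := fun k => hall k k0
    have hSeq : S = (K : ℝ) * a k0 := by
      calc S = ∑ i, a k0 * (1 / r i) := by
            apply Finset.sum_congr rfl
            intro i _
            rw [← hdiv i, haeq i]
        _ = (K : ℝ) * a k0 := by rw [← Finset.mul_sum, hKsum]; ring
    rw [hSeq]
end
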